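/- arXiv:1710.03728 — 4 statements merged into one kernel-verified Lean document; each statement's English description precedes it below -/
import Mathlib

section
/- Let f be a holomorphic function on a bounded open neighborhood U of 0 in ℂ with f(0) = 0, such that for every z ∈ U the full forward orbit f^n(z) stays in U and converges to 0. Then the derivative λ = f'(0) satisfies |λ| < 1. -/
/-!
By the Cauchy formula, `(f^[n])'(0)` is an integral of `f^[n](z) / z²` over a small circle
around `0`. The iterates are uniformly bounded there, since `U` is bounded, and converge
pointwise to `0`, so by dominated convergence `λ ^ n = (f^[n])'(0) → 0`, i.e. `‖λ‖ < 1`.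
-/

open Filter Metric Set Complex Topology Real

variable {E : Type*} [NormedAddCommGroup E] [NormedSpace ℂ E]

theorem tendsto_circleIntegral_of_dominated_convergence {F : ℕ → ℂ → E} {f : ℂ → E} {c : ℂ}
    {R C : ℝ}
    (hF : ∀ n, CircleIntegrable (F n) c R) (hbound : ∀ n, ∀ z ∈ sphere c |R|, ‖F n z‖ ≤ C)
    (hlim : ∀ z ∈ sphere c |R|, Tendsto (fun n => F n z) atTop (𝓝 (f z))) :
    Tendsto (fun n => ∮ z in C(c, R), F n z) atTop (𝓝 (∮ z in C(c, R), f z)) := by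
  refine intervalIntegral.tendsto_integral_filter_of_dominated_convergence (fun _ => |R| * C)
    (.of_forall fun n => (hF n).out.def'.1) (.of_forall fun n => .of_forall fun θ _ => ?_)
    intervalIntegrable_const (.of_forall fun θ _ => ?_)
  · rw [norm_smul, deriv_circleMap, norm_mul, norm_circleMap_zero, norm_I, mul_one]
    exact mul_le_mul_of_nonneg_left (hbound n _ (circleMap_mem_sphere' c R θ)) (abs_nonneg R)
  · exact (hlim _ (circleMap_mem_sphere' c R θ)).const_smul _

theorem tendsto_deriv_of_tendsto_zero_on_sphere [CompleteSpace E] {g : ℕ → ℂ → E} {c : ℂ}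
    {R C : ℝ} (hR : 0 < R)
    (hg : ∀ n, DifferentiableOn ℂ (g n) (closedBall c R))
    (hbound : ∀ n, ∀ z ∈ sphere c R, ‖g n z‖ ≤ C)
    (hlim : ∀ z ∈ sphere c R, Tendsto (fun n => g n z) atTop (𝓝 0)) :
    Tendsto (fun n => deriv (g n) c) atTop (𝓝 0) := by
  have hcauchy : ∀ n, deriv (g n) c
      = (2 * π * I)⁻¹ • ∮ z in C(c, R), (1 / (z - c) ^ 2) • g n z := fun n => by
    rw [(hg n).deriv_eq_smul_circleIntegral hR, inv_smul_smul₀ two_pi_I_ne_zero]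
  rw [← abs_of_pos hR] at hbound hlim
  have hsphere : ∀ z ∈ sphere c |R|, ‖(1 / (z - c) ^ 2 : ℂ)‖ = (R ^ 2)⁻¹ := fun z hz => by
    rw [mem_sphere_iff_norm] at hz
    simp [hz]
  have hint : Tendsto (fun n => ∮ z in C(c, R), (1 / (z - c) ^ 2) • g n z) atTop (𝓝 0) := by
    rw [show (0 : E) = ∮ _ in C(c, R), (0 : E) by simp [circleIntegral]]
    refine tendsto_circleIntegral_of_dominated_convergence (C := (R ^ 2)⁻¹ * C) (fun n => ?_)
      (fun n z hz => ?_) (fun z hz => ?_)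
    · refine ContinuousOn.circleIntegrable hR.le ((continuousOn_const.div ?_ ?_).smul
        ((hg n).continuousOn.mono sphere_subset_closedBall))
      · fun_prop
      · exact fun z hz => by simp [sub_eq_zero, ne_of_mem_sphere hz hR.ne']
    · rw [norm_smul, hsphere z hz]
      exact mul_le_mul_of_nonneg_left (hbound n z hz) (by positivity)
    · convert (hlim z hz).const_smul (1 / (z - c) ^ 2) using 2
      exact (smul_zero _).symm
  simpa only [hcauchy, smul_zero] using hint.const_smul (2 * π * I)⁻¹

theorem deriv_iterate_of_isFixedPt {𝕜 : Type*} [NontriviallyNormedField 𝕜] {f : 𝕜 → 𝕜} {x : 𝕜}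
    (hf : DifferentiableAt 𝕜 f x) (hx : Function.IsFixedPt f x) (n : ℕ) :
    deriv f^[n] x = deriv f x ^ n :=
  (HasDerivAt.iterate x hf.hasDerivAt hx n).deriv

/-- If `f` is holomorphic on a bounded open neighborhood `U` of `0` in `ℂ`, fixes `0`,
maps `U` into itself, and every forward orbit of a point of `U` converges to `0`,
then the multiplier `λ = f'(0)` satisfies `|λ| < 1`. -/
theorem stmt0 (U : Set ℂ) (hUopen : IsOpen U) (hUbdd : Bornology.IsBounded U)
    (h0U : (0 : ℂ) ∈ U) (f : ℂ → ℂ) (hf : DifferentiableOn ℂ f U)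
    (hf0 : f 0 = 0) (hmaps : Set.MapsTo f U U)
    (hconv : ∀ z ∈ U, Filter.Tendsto (fun n => f^[n] z) Filter.atTop (nhds 0)) :
    ‖deriv f 0‖ < 1 := by
  obtain ⟨r, hr0, hrU⟩ := nhds_basis_closedBall.mem_iff.1 (hUopen.mem_nhds h0U)
  obtain ⟨M, hM⟩ := hUbdd.subset_closedBall 0
  have hsphere : sphere (0 : ℂ) r ⊆ U := sphere_subset_closedBall.trans hrU
  have hpow : Tendsto (fun n => deriv f 0 ^ n) atTop (𝓝 0) := by
    refine (tendsto_deriv_of_tendsto_zero_on_sphere hr0 (C := M)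
      (fun n => (hf.iterate hmaps n).mono hrU) (fun n z hz => ?_)
      (fun z hz => hconv z (hsphere hz))).congr fun n => ?_
    · simpa using hM (hmaps.iterate n (hsphere hz))
    · exact deriv_iterate_of_isFixedPt (hf.differentiableAt (hUopen.mem_nhds h0U)) hf0 n
  simpa using hpow.norm
end

section
/- Let p ≥ 1 and A(x) = A₀ + A₁x + ⋯ + A_{p−1}x^{p−1} ∈ ℂ[x] with A₀ ≠ 0. Then there exists a formal power series ζ(x) = x + Σ_{j≥2} ζ_j x^j such that −A₀/(p·ζ(x)^p) = −A₀/(p x^p) − A₁/((p−1)x^{p−1}) − ⋯ − A_{p−1}/x, i.e. −A₀/(p ζ(x)^p) equals the primitive ∫ A(x)/x^{p+1} dx (with zero constant term in its Laurent expansion). Moreover the coefficients satisfy A₁ = −(p−1)·A₀·ζ₂ and, for 2 ≤ j < p, A_j = A₀·(−(p−j)·ζ_{j+1} + P_j(ζ₂,…,ζ_j)) where P_j is a polynomial with real coefficients. -/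
/-!
Write `ζ = x·a`. The identity to achieve is `a^p · B = A₀` with `B = Σ_{j<p} p A_j/(p−j) x^j`;
as `B(0) = A₀ ≠ 0` and `p` is invertible, Hensel's lemma in `ℂ⟦x⟧` provides a `p`-th root `a`
of `A₀/B` with `a(0) = 1`. Then `B = A₀ a^{-p}`, i.e. `A_j = (p−j)/p · A₀ · [x^j] a^{-p}`.

To see the shape of `[x^j] a^{-p}`, take the generic `a = 1 + Σ_{k≥1} ζ_{k+1} x^k` over
`ℝ[ζ_2, ζ_3, …]`. Among series with constant term `1`, those whose `j`-th coefficient is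
`c ζ_{j+1}` plus a polynomial in `ζ_2, …, ζ_j` (for every `j ≥ 1`) are closed under products,
where the slopes `c` add, and under inverses, where `c` changes sign. Hence
`[x^j] a^{-p} = −p ζ_{j+1} + Q_j(ζ_2, …, ζ_j)`, and specialising the `ζ_i` to the coefficients
of `ζ` gives the formula for `A_j`.
-/

open PowerSeries
open MvPolynomial (supported aeval)

section
variable {A S : Type*} [CommRing A] [SetLike S A] [SubringClass S A] (s : S)

theorem coeff_mul_sub_coeff_sub_coeff_mem {f g : A⟦X⟧} (hf : constantCoeff f = 1)
    (hg : constantCoeff g = 1) {j : ℕ} (hfs : ∀ i, 1 ≤ i → i < j → coeff i f ∈ s)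
    (hgs : ∀ i, 1 ≤ i → i < j → coeff i g ∈ s) :
    coeff j (f * g) - coeff j f - coeff j g ∈ s := by
  rcases j with _ | k
  · simp [hf, hg]
  rw [coeff_mul, Finset.Nat.sum_antidiagonal_eq_sum_range_succ_mk, Finset.sum_range_succ,
    Finset.sum_range_succ']
  simp only [Nat.sub_self, Nat.sub_zero, coeff_zero_eq_constantCoeff_apply, hf, hg, one_mul,
    mul_one, add_sub_cancel_right]
  refine sum_mem fun i hi => ?_
  have hik := Finset.mem_range.1 hi
  exact mul_mem (hfs _ (by omega) (by omega)) (hgs _ (by omega) (by omega))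
end

theorem exists_pow_eq_of_constantCoeff_eq_one {k : Type*} [Field k] {n : ℕ} (hn : (n : k) ≠ 0)
    {F : k⟦X⟧} (hF : constantCoeff F = 1) : ∃ a : k⟦X⟧, a ^ n = F ∧ constantCoeff a = 1 := by
  have hn0 : n ≠ 0 := by rintro rfl; simp at hn
  have hmem : ∀ g : k⟦X⟧, g ∈ Ideal.span {X} ↔ constantCoeff g = 0 := fun g => by
    rw [Ideal.mem_span_singleton, X_dvd_iff]
  obtain ⟨a, ha, ha1⟩ := HenselianRing.is_henselian (I := Ideal.span {(X : k⟦X⟧)})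
    (Polynomial.X ^ n - Polynomial.C F) (Polynomial.monic_X_pow_sub_C F hn0) 1
    (by simp [hmem, hF]) (by
      refine IsUnit.map _ ?_
      simpa [Polynomial.derivative_X_pow, isUnit_iff_constantCoeff] using hn)
  refine ⟨a, by simpa [sub_eq_zero] using ha, ?_⟩
  simpa [hmem, sub_eq_zero] using ha1

theorem exists_pow_mul_eq_C_mul_X_pow {k : Type*} [Field k] {n : ℕ} (hn : (n : k) ≠ 0)
    {B : k⟦X⟧} (hB : constantCoeff B ≠ 0) :
    ∃ ζ : k⟦X⟧, constantCoeff ζ = 0 ∧ coeff 1 ζ = 1 ∧ ζ ^ n * B = C (constantCoeff B) * X ^ n := by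
  obtain ⟨a, ha, ha1⟩ := exists_pow_eq_of_constantCoeff_eq_one hn
    (F := C (constantCoeff B) * B⁻¹) (by simp [hB])
  refine ⟨X * a, by simp, by simp [coeff_succ_X_mul, ha1], ?_⟩
  rw [mul_pow, ha, mul_assoc, mul_assoc, PowerSeries.inv_mul_cancel B hB]
  ring

variable {R : Type*} [CommRing R]

/-- `f = 1 + Σ_{j ≥ 1} (c ζ_{j+1} + q_j(ζ_2, …, ζ_j)) x^j`, the variable `X i` standing for `ζ_i`. -/
def HasLinearLeadingTerm (c : R) (f : (MvPolynomial ℕ R)⟦X⟧) : Prop :=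
  constantCoeff f = 1 ∧ ∀ j, 1 ≤ j →
    coeff j f - MvPolynomial.C c * MvPolynomial.X (j + 1) ∈ supported R (Set.Icc 2 j)

theorem mem_supported_Icc_of_sub_C_mul_X_mem {x : MvPolynomial ℕ R} {c : R} {i j : ℕ} (hi : 1 ≤ i)
    (hij : i < j) (hx : x - MvPolynomial.C c * MvPolynomial.X (i + 1) ∈ supported R (Set.Icc 2 i)) :
    x ∈ supported R (Set.Icc 2 j) := by
  have hX : MvPolynomial.X (i + 1) ∈ supported R (Set.Icc 2 j) :=
    Algebra.subset_adjoin ⟨i + 1, ⟨by omega, by omega⟩, rfl⟩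
  have hrest := MvPolynomial.supported_mono (Set.Icc_subset_Icc_right hij.le) hx
  simpa using add_mem hrest (mul_mem (Subalgebra.algebraMap_mem _ c) hX)

namespace HasLinearLeadingTerm

variable {c d : R} {f g : (MvPolynomial ℕ R)⟦X⟧}

theorem coeff_mem (hf : HasLinearLeadingTerm c f) {i j : ℕ} (hi : 1 ≤ i) (hij : i < j) :
    coeff i f ∈ supported R (Set.Icc 2 j) :=
  mem_supported_Icc_of_sub_C_mul_X_mem hi hij (hf.2 i hi)

theorem mul (hf : HasLinearLeadingTerm c f) (hg : HasLinearLeadingTerm d g) :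
    HasLinearLeadingTerm (c + d) (f * g) := by
  refine ⟨by simp [hf.1, hg.1], fun j hj => ?_⟩
  have hmid := coeff_mul_sub_coeff_sub_coeff_mem (supported R (Set.Icc 2 j)) hf.1 hg.1
    (fun i hi hij => hf.coeff_mem hi hij) (fun i hi hij => hg.coeff_mem hi hij)
  have := add_mem (add_mem hmid (hf.2 j hj)) (hg.2 j hj)
  convert this using 1
  simp only [map_add]
  ring

theorem pow (hf : HasLinearLeadingTerm c f) (n : ℕ) : HasLinearLeadingTerm (n * c) (f ^ n) := by
  induction n with
  | zero => exact ⟨by simp, fun j hj => by simp [coeff_one, show j ≠ 0 by omega]⟩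
  | succ n ih => simpa [pow_succ, add_mul] using ih.mul hf

theorem of_mul_eq_one (hf : HasLinearLeadingTerm c f) (hfg : f * g = 1) :
    HasLinearLeadingTerm (-c) g := by
  have hg0 : constantCoeff g = 1 := by
    simpa [hf.1] using congrArg constantCoeff hfg
  refine ⟨hg0, fun j => ?_⟩
  induction j using Nat.strong_induction_on with
  | _ j ih =>
  intro hj
  have hmid := coeff_mul_sub_coeff_sub_coeff_mem (supported R (Set.Icc 2 j)) hf.1 hg0
    (fun i hi hij => hf.coeff_mem hi hij)
    (fun i hi hij => mem_supported_Icc_of_sub_C_mul_X_mem hi hij (ih i hij hi))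
  have := sub_mem (neg_mem hmid) (hf.2 j hj)
  rw [hfg, coeff_one, if_neg (by omega)] at this
  convert this using 1
  simp only [map_neg]
  ring

end HasLinearLeadingTerm

section Generic

variable (R)

/-- `ζ(x)/x` for the generic `ζ(x) = x + Σ_{j ≥ 2} ζ_j x^j`. -/
noncomputable def genericSeries : (MvPolynomial ℕ R)⟦X⟧ :=
  mk fun k => if k = 0 then 1 else MvPolynomial.X (k + 1)

theorem hasLinearLeadingTerm_genericSeries : HasLinearLeadingTerm 1 (genericSeries R) :=
  ⟨by simp [genericSeries], fun j hj => by simp [genericSeries, show j ≠ 0 by omega]⟩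

noncomputable def genericInvPow (p : ℕ) : (MvPolynomial ℕ R)⟦X⟧ :=
  invOfUnit (genericSeries R ^ p) 1

theorem genericSeries_pow_mul_genericInvPow (p : ℕ) :
    genericSeries R ^ p * genericInvPow R p = 1 :=
  mul_invOfUnit _ _ ((hasLinearLeadingTerm_genericSeries R).pow p).1

theorem hasLinearLeadingTerm_genericInvPow (p : ℕ) :
    HasLinearLeadingTerm (-(p : R)) (genericInvPow R p) := by
  simpa using ((hasLinearLeadingTerm_genericSeries R).pow p).of_mul_eq_one
    (genericSeries_pow_mul_genericInvPow R p)

theorem coeff_genericInvPow_add_mem_supported (p : ℕ) {j : ℕ} (hj : 1 ≤ j) :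
    coeff j (genericInvPow R p) + MvPolynomial.C (p : R) * MvPolynomial.X (j + 1) ∈
      supported R (Set.Icc 2 j) := by
  simpa using (hasLinearLeadingTerm_genericInvPow R p).2 j hj

theorem coeff_one_genericInvPow (p : ℕ) :
    coeff 1 (genericInvPow R p) = -(MvPolynomial.C (p : R) * MvPolynomial.X 2) := by
  have h := congrArg (coeff 1) (genericSeries_pow_mul_genericInvPow R p)
  have h1 : coeff 1 (genericSeries R) = MvPolynomial.X 2 := by simp [genericSeries]
  rw [coeff_one_mul, coeff_one_pow, (hasLinearLeadingTerm_genericInvPow R p).1,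
    ((hasLinearLeadingTerm_genericSeries R).pow p).1, h1,
    (hasLinearLeadingTerm_genericSeries R).1, coeff_one, if_neg one_ne_zero, one_pow] at h
  rw [map_natCast]
  linear_combination h

end Generic

section Specialization

variable {S : Type*} [CommRing S] [Algebra R S] {ζ : S⟦X⟧}

theorem X_mul_map_genericSeries (h0 : constantCoeff ζ = 0) (h1 : coeff 1 ζ = 1) :
    X * map (aeval fun i => coeff i ζ).toRingHom (genericSeries R) = ζ := by
  ext n
  rcases n with _ | _ | n
  · simp [h0]
  · simp [coeff_succ_X_mul, genericSeries, h1]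
  · simp [coeff_succ_X_mul, genericSeries]

theorem coeff_eq_mul_aeval_coeff_genericInvPow (h0 : constantCoeff ζ = 0) (h1 : coeff 1 ζ = 1)
    {p : ℕ} {B : S⟦X⟧} {b : S} (h : ζ ^ p * B = C b * X ^ p) (j : ℕ) :
    coeff j B = b * aeval (fun i => coeff i ζ) (coeff j (genericInvPow R p)) := by
  set φ := (aeval (R := R) fun i => coeff i ζ).toRingHom
  set a := map φ (genericSeries R)
  have haB : a ^ p * B = C b := by
    apply X_pow_mul_cancel (k := p)
    rw [← X_mul_map_genericSeries (R := R) h0 h1, mul_pow] at h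
    linear_combination h
  have hinv : a ^ p * map φ (genericInvPow R p) = 1 := by
    rw [← map_pow, ← map_mul, genericSeries_pow_mul_genericInvPow R, map_one]
  have hB : B = C b * map φ (genericInvPow R p) := by
    linear_combination map φ (genericInvPow R p) * haB - B * hinv
  rw [hB, coeff_C_mul, coeff_map]
  rfl

end Specialization

theorem stmt12_general (p : ℕ) (hp : 1 ≤ p) (A : ℕ → ℂ) (hA0 : A 0 ≠ 0) :
    ∃ ζ : PowerSeries ℂ,
      PowerSeries.constantCoeff ζ = 0 ∧ PowerSeries.coeff 1 ζ = 1 ∧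
      PowerSeries.C (A 0) * PowerSeries.X ^ p =
        ζ ^ p * ∑ j ∈ Finset.range p,
          PowerSeries.C ((p : ℂ) * A j / ((p : ℂ) - (j : ℂ))) * PowerSeries.X ^ j ∧
      (2 ≤ p → A 1 = -((p : ℂ) - 1) * A 0 * PowerSeries.coeff 2 ζ) ∧
      ∃ P : ℕ → MvPolynomial ℕ ℝ, ∀ j, 2 ≤ j → j < p →
        (∀ i ∈ (P j).vars, 2 ≤ i ∧ i ≤ j) ∧
        A j = A 0 * (-((p : ℂ) - (j : ℂ)) * PowerSeries.coeff (j + 1) ζ +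
          MvPolynomial.aeval (fun i => PowerSeries.coeff i ζ) (P j)) := by
  set B : ℂ⟦X⟧ := ∑ j ∈ Finset.range p, C ((p : ℂ) * A j / ((p : ℂ) - (j : ℂ))) * X ^ j
  have hpC : (p : ℂ) ≠ 0 := Nat.cast_ne_zero.2 (by omega)
  have hB : ∀ j < p, coeff j B = p * A j / (p - j) := fun j hj => by
    simp [B, coeff_X_pow, hj]
  have hB0 : constantCoeff B = A 0 := by
    rw [← coeff_zero_eq_constantCoeff_apply, hB 0 hp]
    simp [hpC]
  obtain ⟨ζ, hζ0, hζ1, hζB⟩ := exists_pow_mul_eq_C_mul_X_pow hpC (hB0 ▸ hA0)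
  rw [hB0] at hζB
  set W := genericInvPow ℝ p
  set z : ℕ → ℂ := fun i => coeff i ζ
  have hA : ∀ j < p, A j = ((p : ℂ) - j) / p * (A 0 * aeval z (coeff j W)) := by
    intro j hj
    have hpj : (p : ℂ) - j ≠ 0 := sub_ne_zero.2 (by exact_mod_cast hj.ne')
    rw [← coeff_eq_mul_aeval_coeff_genericInvPow hζ0 hζ1 hζB, hB j hj]
    field_simp
  refine ⟨ζ, hζ0, hζ1, hζB.symm, fun hp2 => ?_,
    fun j => MvPolynomial.C (((p : ℝ) - j) / p) *
      (coeff j W + MvPolynomial.C (p : ℝ) * MvPolynomial.X (j + 1)),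
    fun j hj2 hjp => ⟨fun i hi => ?_, ?_⟩⟩
  · rw [hA 1 (by omega), coeff_one_genericInvPow]
    simp only [Nat.cast_one, map_natCast, map_neg, map_mul, MvPolynomial.aeval_X, z]
    field_simp
  · exact MvPolynomial.mem_supported.1 (mul_mem (Subalgebra.algebraMap_mem _ _)
      (coeff_genericInvPow_add_mem_supported ℝ p (by omega))) hi
  · rw [hA j hjp]
    simp only [map_mul, map_add, MvPolynomial.aeval_C, MvPolynomial.aeval_X, Complex.coe_algebraMap]
    push_cast
    field_simp
    ring

/-- Conjugation of the principal part of a meromorphic primitive: given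
`A(x) = A₀ + ⋯ + A_{p−1}x^{p−1}` with `A₀ ≠ 0`, there is a formal series
`ζ(x) = x + Σ ζ_j x^j` with `−A₀/(p ζ(x)^p) = Σ_{j=0}^{p−1} −A_j/((p−j)x^{p−j})`,
equivalently `A₀ x^p = ζ^p · Σ_{j<p} (p A_j/(p−j)) x^j`. Moreover
`A₁ = −(p−1) A₀ ζ₂` and `A_j = A₀(−(p−j)ζ_{j+1} + P_j(ζ₂,…,ζ_j))`
with `P_j` real-coefficient polynomials. -/
theorem stmt12 (p : ℕ) (hp : 1 ≤ p) (A : ℕ → ℂ) (hA0 : A 0 ≠ 0)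
    (hAhigh : ∀ j, p ≤ j → A j = 0) :
    ∃ ζ : PowerSeries ℂ,
      PowerSeries.constantCoeff ζ = 0 ∧ PowerSeries.coeff 1 ζ = 1 ∧
      PowerSeries.C (A 0) * PowerSeries.X ^ p =
        ζ ^ p * ∑ j ∈ Finset.range p,
          PowerSeries.C ((p : ℂ) * A j / ((p : ℂ) - (j : ℂ))) * PowerSeries.X ^ j ∧
      (2 ≤ p → A 1 = -((p : ℂ) - 1) * A 0 * PowerSeries.coeff 2 ζ) ∧
      ∃ P : ℕ → MvPolynomial ℕ ℝ, ∀ j, 2 ≤ j → j < p →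
        (∀ i ∈ (P j).vars, 2 ≤ i ∧ i ≤ j) ∧
        A j = A 0 * (-((p : ℂ) - (j : ℂ)) * PowerSeries.coeff (j + 1) ζ +
          MvPolynomial.aeval (fun i => PowerSeries.coeff i ζ) (P j)) :=
  stmt12_general p hp A hA0
end

section
/- Let g : ℂ → ℂ be given by g(x) = x − x^{m} + h(x) where m ≥ 2 and |h(x)| ≤ C|x|^{m+1} on |x| < ε₀. Define, for d, e, ε > 0, the sector R_{d,e,ε} = { x ∈ ℂ : |x| < ε, −d·Re(x) < Im(x) < e·Re(x) }. Then for d, e, ε > 0 sufficiently small: (i) Re(g(x)) > 0 for x ∈ R_{d,e,ε}; (ii) |g(x)| ≤ |x| for x ∈ R_{d,e,ε}; and in fact g(R_{d,e,ε}) ⊆ R_{d,e,ε}. -/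
/-!
Put `e = tan θ`; then `x` lies strictly between the two edges of the sector iff
`0 < Im (exp (iθ) x)` and `Im (exp (-iθ) x) < 0`. For `x = ρ exp (iφ)` with `|φ| < θ`,
`Im (exp (-iθ) (x - x ^ m)) = ρ sin (φ - θ) - ρ ^ m sin (mφ - θ)`. If `φ ≤ 3θ/4` the first term
is at most `-ρ sin (θ/4)` and dominates; if `φ > 3θ/4` then `mφ - θ ≥ θ/2`, so the second term is
at most `-ρ ^ m sin (θ/4)`. Either way it beats the error `C ρ ^ (m + 1)` once `(1 + C) ρ < sin (θ/4)`,
and the lower edge is the mirror image. The modulus decreases because `x - x ^ m = x (1 - x ^ (m - 1))`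
and `x ^ (m - 1)` is small with argument at most `π/3`.
-/

open Real

namespace Complex

lemma pow_eq_norm_pow_mul_exp_arg (x : ℂ) (k : ℕ) :
    x ^ k = (‖x‖ ^ k : ℝ) * exp ((k * arg x : ℝ) * I) := by
  conv_lhs => rw [← norm_mul_exp_arg_mul_I x]
  rw [mul_pow, ← exp_nat_mul]
  push_cast
  ring_nf

lemma re_pow (x : ℂ) (k : ℕ) : (x ^ k).re = ‖x‖ ^ k * Real.cos (k * arg x) := by
  rw [pow_eq_norm_pow_mul_exp_arg, re_ofReal_mul, exp_ofReal_mul_I_re]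

lemma im_exp_mul_I_mul (θ : ℝ) (z : ℂ) :
    (exp (θ * I) * z).im = Real.cos θ * z.im + Real.sin θ * z.re := by
  rw [mul_im, exp_ofReal_mul_I_re, exp_ofReal_mul_I_im]

lemma im_exp_mul_I_mul_pow (θ : ℝ) (x : ℂ) (k : ℕ) :
    (exp (θ * I) * x ^ k).im = ‖x‖ ^ k * Real.sin (k * arg x + θ) := by
  rw [pow_eq_norm_pow_mul_exp_arg, mul_left_comm, im_ofReal_mul, ← exp_add, ← add_mul,
    ← ofReal_add, exp_ofReal_mul_I_im, add_comm]

lemma abs_im_exp_mul_I_mul_le (θ : ℝ) (z : ℂ) : |(exp (θ * I) * z).im| ≤ ‖z‖ := by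
  simpa [norm_exp_ofReal_mul_I] using abs_im_le_norm (exp (θ * I) * z)

lemma abs_arg_lt_of_im_exp_mul_I_mul {θ : ℝ} {x : ℂ} (hθ : 0 ≤ θ)
    (hlow : 0 < (exp (θ * I) * x).im) (hup : (exp ((-θ : ℝ) * I) * x).im < 0) :
    |arg x| < θ := by
  rw [← pow_one x, im_exp_mul_I_mul_pow] at hlow hup
  simp only [pow_one, Nat.cast_one, one_mul] at hlow hup
  have hpi₁ := neg_pi_lt_arg x
  have hpi₂ := arg_le_pi x
  refine abs_lt.2 ⟨?_, ?_⟩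
  · by_contra! h
    have := Real.sin_nonpos_of_nonpos_of_neg_pi_le (x := arg x + θ) (by linarith) (by linarith)
    nlinarith [norm_nonneg x]
  · by_contra! h
    have := Real.sin_nonneg_of_nonneg_of_le_pi (x := arg x + -θ) (by linarith) (by linarith)
    nlinarith [norm_nonneg x]

lemma norm_one_sub_le_of_sq_norm_le_re {w : ℂ} (h : ‖w‖ ^ 2 ≤ w.re) :
    ‖1 - w‖ ≤ 1 - w.re / 2 := by
  have hre : w.re ≤ 1 := by nlinarith [re_le_norm w, norm_nonneg w]
  have hsq : ‖1 - w‖ ^ 2 = 1 - 2 * w.re + ‖w‖ ^ 2 := by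
    simp only [Complex.sq_norm, normSq_apply, sub_re, sub_im, one_re, one_im]
    ring
  refine (pow_le_pow_iff_left₀ (norm_nonneg _) (by linarith) two_ne_zero).1 ?_
  nlinarith

lemma norm_sub_pow_le {m : ℕ} (hm : m ≠ 0) {x : ℂ} (hx : ‖x‖ ^ (m - 1) ≤ 1 / 2)
    (harg : m * |arg x| ≤ π / 3) : ‖x - x ^ m‖ ≤ ‖x‖ - ‖x‖ ^ m / 4 := by
  set s := ‖x‖ ^ (m - 1)
  have hcos : 1 / 2 ≤ Real.cos ((m - 1 : ℕ) * arg x) := by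
    rw [← Real.cos_abs, ← cos_pi_div_three, abs_mul, Nat.abs_cast]
    have : ((m - 1 : ℕ) : ℝ) ≤ m := by exact_mod_cast Nat.sub_le m 1
    apply Real.cos_le_cos_of_nonneg_of_le_pi (by positivity) (by linarith [pi_pos])
    nlinarith [abs_nonneg (arg x)]
  have hre : s / 2 ≤ (x ^ (m - 1)).re := by
    rw [re_pow]
    nlinarith [pow_nonneg (norm_nonneg x) (m - 1)]
  have hsq : ‖x ^ (m - 1)‖ ^ 2 ≤ (x ^ (m - 1)).re := by
    rw [norm_pow]
    nlinarith [pow_nonneg (norm_nonneg x) (m - 1)]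
  calc ‖x - x ^ m‖ = ‖x‖ * ‖1 - x ^ (m - 1)‖ := by
        rw [← norm_mul, mul_sub, mul_one, mul_pow_sub_one hm]
    _ ≤ ‖x‖ * (1 - s / 4) := by
        gcongr
        linarith [norm_one_sub_le_of_sq_norm_le_re hsq]
    _ = ‖x‖ - ‖x‖ ^ m / 4 := by
        rw [mul_sub, mul_one, ← mul_div_assoc, mul_pow_sub_one hm]

end Complex

lemma mul_sin_sub_add_lt_pow_mul_sin {m : ℕ} (hm : 2 ≤ m) {θ φ ρ C : ℝ} (hθ : 0 < θ)
    (hmθ : m * θ ≤ π / 2) (hφ : |φ| < θ) (hρ : 0 < ρ) (hC : 0 ≤ C)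
    (hρC : (1 + C) * ρ < Real.sin (θ / 4)) :
    ρ * Real.sin (φ - θ) + C * ρ ^ (m + 1) < ρ ^ m * Real.sin (m * φ - θ) := by
  have hm' : (2 : ℝ) ≤ m := by exact_mod_cast hm
  obtain ⟨hφl, hφu⟩ := abs_lt.1 hφ
  have hρ1 : ρ ≤ 1 := by nlinarith [sin_le_one (θ / 4)]
  have hρm : ρ ^ m ≤ ρ ^ 2 := pow_le_pow_of_le_one hρ.le hρ1 hm
  have hρm1 : ρ ^ (m + 1) = ρ ^ m * ρ := pow_succ ρ m
  rcases le_or_gt φ (3 * θ / 4) with hφA | hφB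
  · have hsin : Real.sin (φ - θ) ≤ -Real.sin (θ / 4) := by
      rw [← Real.sin_neg]
      apply sin_le_sin_of_le_of_le_pi_div_two <;> nlinarith
    have hρm1' : ρ ^ (m + 1) ≤ ρ ^ 2 := pow_le_pow_of_le_one hρ.le hρ1 (by omega)
    nlinarith [neg_one_le_sin (m * φ - θ), pow_pos hρ m]
  · have hsin : Real.sin (φ - θ) < 0 := sin_neg_of_neg_of_neg_pi_lt (by linarith) (by nlinarith)
    have hsinm : Real.sin (θ / 4) ≤ Real.sin (m * φ - θ) := by
      apply sin_le_sin_of_le_of_le_pi_div_two <;> nlinarith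
    nlinarith [pow_pos hρ m]

open Complex

def leauFatouSector (d e ε : ℝ) : Set ℂ :=
  {x | ‖x‖ < ε ∧ -d * x.re < x.im ∧ x.im < e * x.re}

lemma re_pos_of_mem_leauFatouSector {d e ε : ℝ} (hd : 0 ≤ d) (he : 0 ≤ e) {x : ℂ}
    (hx : x ∈ leauFatouSector d e ε) : 0 < x.re := by
  obtain ⟨-, hlow, hup⟩ := hx
  by_contra! h
  nlinarith

lemma mem_leauFatouSector_tan_iff {θ ε : ℝ} (hθ : 0 < Real.cos θ) {x : ℂ} :
    x ∈ leauFatouSector (Real.tan θ) (Real.tan θ) ε ↔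
      ‖x‖ < ε ∧ 0 < (exp (θ * I) * x).im ∧ (exp ((-θ : ℝ) * I) * x).im < 0 := by
  simp only [leauFatouSector, Set.mem_ofPred_eq, im_exp_mul_I_mul, Real.cos_neg, Real.sin_neg,
    Real.tan_eq_sin_div_cos, neg_mul, ← neg_div, div_mul_eq_mul_div, div_lt_iff₀ hθ,
    lt_div_iff₀ hθ]
  constructor <;> rintro ⟨h₁, h₂, h₃⟩ <;> exact ⟨h₁, by linarith, by linarith⟩

section Perturbation

variable {m : ℕ} {θ C : ℝ} {x r : ℂ}

lemma im_exp_mul_I_mul_sub_pow_add_neg (hm : 2 ≤ m) (hθ : 0 < θ) (hmθ : m * θ ≤ π / 2)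
    (hC : 0 ≤ C) (harg : |arg x| < θ) (hx : 0 < ‖x‖) (hxC : (1 + C) * ‖x‖ < Real.sin (θ / 4))
    (hr : ‖r‖ ≤ C * ‖x‖ ^ (m + 1)) :
    (exp ((-θ : ℝ) * I) * (x - x ^ m + r)).im < 0 := by
  have key := mul_sin_sub_add_lt_pow_mul_sin hm hθ hmθ harg hx hC hxC
  have hx1 := im_exp_mul_I_mul_pow (-θ) x 1
  have hxm := im_exp_mul_I_mul_pow (-θ) x m
  have hr' := abs_le.1 (abs_im_exp_mul_I_mul_le (-θ) r)
  simp only [pow_one, Nat.cast_one, one_mul, ← sub_eq_add_neg] at hx1 hxm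
  rw [mul_add, mul_sub, add_im, sub_im, hx1, hxm]
  linarith [hr'.2]

lemma im_exp_mul_I_mul_sub_pow_add_pos (hm : 2 ≤ m) (hθ : 0 < θ) (hmθ : m * θ ≤ π / 2)
    (hC : 0 ≤ C) (harg : |arg x| < θ) (hx : 0 < ‖x‖) (hxC : (1 + C) * ‖x‖ < Real.sin (θ / 4))
    (hr : ‖r‖ ≤ C * ‖x‖ ^ (m + 1)) :
    0 < (exp (θ * I) * (x - x ^ m + r)).im := by
  have key := mul_sin_sub_add_lt_pow_mul_sin hm hθ hmθ (φ := -arg x) (by rwa [abs_neg]) hx hC hxC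
  have hx1 := im_exp_mul_I_mul_pow θ x 1
  have hxm := im_exp_mul_I_mul_pow θ x m
  have hr' := abs_le.1 (abs_im_exp_mul_I_mul_le θ r)
  simp only [pow_one, Nat.cast_one, one_mul] at hx1 hxm
  rw [show -arg x - θ = -(arg x + θ) by ring, show m * -arg x - θ = -(m * arg x + θ) by ring,
    Real.sin_neg, Real.sin_neg] at key
  rw [mul_add, mul_sub, add_im, sub_im, hx1, hxm]
  linarith [hr'.1]

lemma norm_sub_pow_add_le (hm : 2 ≤ m) (hC : 0 ≤ C) (harg : m * |arg x| ≤ π / 3)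
    (hxC : (1 + C) * ‖x‖ ≤ 1 / 4) (hr : ‖r‖ ≤ C * ‖x‖ ^ (m + 1)) :
    ‖x - x ^ m + r‖ ≤ ‖x‖ := by
  have hx1 : ‖x‖ ≤ 1 / 4 := by nlinarith [norm_nonneg x]
  have hxm : ‖x‖ ^ (m - 1) ≤ 1 / 2 :=
    (pow_le_of_le_one (norm_nonneg x) (by linarith) (by omega)).trans (by linarith)
  have hCx : C * ‖x‖ ^ (m + 1) ≤ ‖x‖ ^ m / 4 := by
    have : C * ‖x‖ ≤ 1 / 4 := by nlinarith [norm_nonneg x]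
    rw [pow_succ]
    nlinarith [mul_le_mul_of_nonneg_left this (pow_nonneg (norm_nonneg x) m)]
  calc ‖x - x ^ m + r‖ ≤ ‖x - x ^ m‖ + ‖r‖ := norm_add_le _ _
    _ ≤ ‖x‖ - ‖x‖ ^ m / 4 + ‖x‖ ^ m / 4 := by
        gcongr
        · exact norm_sub_pow_le (by omega) hxm harg
        · exact hr.trans hCx
    _ = ‖x‖ := by ring

end Perturbation

theorem norm_le_and_mem_leauFatouSector {m : ℕ} (hm : 2 ≤ m) {C ε₀ θ ε : ℝ} (hC : 0 ≤ C)
    {g : ℂ → ℂ} (hg : ∀ x : ℂ, ‖x‖ < ε₀ → ‖g x - (x - x ^ m)‖ ≤ C * ‖x‖ ^ (m + 1))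
    (hθ : 0 < θ) (hmθ : m * θ ≤ π / 3) (hεε₀ : ε ≤ ε₀) (hεθ : (1 + C) * ε ≤ Real.sin (θ / 4))
    {x : ℂ} (hx : x ∈ leauFatouSector (Real.tan θ) (Real.tan θ) ε) :
    ‖g x‖ ≤ ‖x‖ ∧ g x ∈ leauFatouSector (Real.tan θ) (Real.tan θ) ε := by
  have hm' : (2 : ℝ) ≤ m := by exact_mod_cast hm
  have hθ1 : θ < 1 := by nlinarith [pi_lt_four]
  have hcos : 0 < Real.cos θ := cos_pos_of_mem_Ioo ⟨by linarith [pi_pos], by linarith [pi_gt_three]⟩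
  rw [mem_leauFatouSector_tan_iff hcos] at hx ⊢
  obtain ⟨hxε, hlow, hup⟩ := hx
  have harg := abs_arg_lt_of_im_exp_mul_I_mul hθ.le hlow hup
  have hx0 : 0 < ‖x‖ := norm_pos_iff.2 (by rintro rfl; simp at hlow)
  have hxC : (1 + C) * ‖x‖ < Real.sin (θ / 4) := by nlinarith
  have hgx : g x = x - x ^ m + (g x - (x - x ^ m)) := by ring
  have hr := hg x (hxε.trans_le hεε₀)
  have hnorm : ‖g x‖ ≤ ‖x‖ := by
    rw [hgx]
    refine norm_sub_pow_add_le hm hC (by nlinarith [abs_nonneg (arg x)]) ?_ hr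
    linarith [Real.sin_le (x := θ / 4) (by positivity)]
  have hmθ' : m * θ ≤ π / 2 := by linarith [pi_pos]
  refine ⟨hnorm, hnorm.trans_lt hxε, ?_, ?_⟩ <;> rw [hgx]
  · exact im_exp_mul_I_mul_sub_pow_add_pos hm hθ hmθ' hC harg hx0 hxC hr
  · exact im_exp_mul_I_mul_sub_pow_add_neg hm hθ hmθ' hC harg hx0 hxC hr

/-- Invariance of the Leau–Fatou sector `R_{d,e,ε} = {|x| < ε, −d Re x < Im x < e Re x}`
under `g(x) = x − x^m + O(x^{m+1})`: for `d, e, ε > 0` small enough, every `x ∈ R_{d,e,ε}`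
satisfies `Re(g x) > 0`, `|g x| ≤ |x|`, and `g x ∈ R_{d,e,ε}`. -/
theorem stmt13 (m : ℕ) (hm : 2 ≤ m) (C ε₀ : ℝ) (hC : 0 < C) (hε₀ : 0 < ε₀)
    (g : ℂ → ℂ) (hg : ∀ x : ℂ, ‖x‖ < ε₀ → ‖g x - (x - x ^ m)‖ ≤ C * ‖x‖ ^ (m + 1)) :
    ∃ d e ε : ℝ, 0 < d ∧ 0 < e ∧ 0 < ε ∧ ∀ x : ℂ,
      (‖x‖ < ε ∧ -d * x.re < x.im ∧ x.im < e * x.re) →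
      0 < (g x).re ∧ ‖g x‖ ≤ ‖x‖ ∧
      (‖g x‖ < ε ∧ -d * (g x).re < (g x).im ∧ (g x).im < e * (g x).re) := by
  have hm' : (2 : ℝ) ≤ m := by exact_mod_cast hm
  set θ := π / (3 * m) with hθ_def
  have hθ : 0 < θ := by positivity
  have hmθ : m * θ = π / 3 := by rw [hθ_def]; field_simp
  have hθ6 : θ ≤ π / 6 := by nlinarith
  have htan : 0 < Real.tan θ := tan_pos_of_pos_of_lt_pi_div_two hθ (by linarith [pi_pos])
  have hsin : 0 < Real.sin (θ / 4) := sin_pos_of_pos_of_lt_pi (by positivity) (by linarith)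
  set ε := min ε₀ (Real.sin (θ / 4) / (1 + C))
  have hεθ : (1 + C) * ε ≤ Real.sin (θ / 4) := by
    rw [← le_div_iff₀' (by linarith)]
    exact min_le_right _ _
  refine ⟨Real.tan θ, Real.tan θ, ε, htan, htan, lt_min hε₀ (by positivity), fun x hx => ?_⟩
  obtain ⟨hnorm, hmem⟩ :=
    norm_le_and_mem_leauFatouSector hm hC.le hg hθ hmθ.le (min_le_left _ _) hεθ hx
  exact ⟨re_pos_of_mem_leauFatouSector htan.le htan.le hmem, hnorm, hmem⟩
end

section
/- Let m ≥ 2 and let {x_j} ⊆ ℂ∖{0} be a sequence with x_{j+1} = x_j − x_j^{m} + O(x_j^{m+1}) (i.e. |x_{j+1} − x_j + x_j^m| ≤ C|x_j|^{m+1}), contained in a sector where |x_{j+1}| ≤ |x_j| and Re(x_j^{m−1}) ≥ c|x_j|^{m−1} for fixed c > 0. If x₀ is small enough then lim_{j→∞} (m−1)·j·x_j^{m−1} = 1, and there is C' > 0 with |x_j|^{m−1} ≤ C'·|x₀|^{m−1}/(1 + j·|x₀|^{m−1}) for all j ≥ 0. -/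
/-!
Write `k = m - 1` and pass to the approximate Fatou coordinate `u = 1/(k x^k)`. Since `q ↦ q^{-k}`
has derivative `-k` at `1` and `x_{j+1}/x_j = 1 - x_j^k + O(x_j^{k+1})`, the recursion becomes
`u_{j+1} = u_j + 1 + ε_j` with `ε_j → 0` as `x_j → 0`, uniformly over such orbits. For `x₀` small
the errors stay below `1/2`, so `Re u_j ≥ Re u₀ + j/2`; the sector condition gives
`Re u₀ ≥ c/(k|x₀|^k)`, and `|x_j|^k = 1/(k|u_j|) ≤ 1/(k Re u_j)` yields the uniform bound. In
particular `x_j → 0`, hence `ε_j → 0`, and Cesàro averaging gives `u_j / j → 1`, i.e.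
`k j x_j^k → 1`.
-/

open Filter Topology

theorem tendsto_inv_smul_of_tendsto_sub {E : Type*} [NormedAddCommGroup E] [NormedSpace ℝ E]
    {u : ℕ → E} {v : E} (h : Tendsto (fun n => u (n + 1) - u n) atTop (𝓝 v)) :
    Tendsto (fun n : ℕ => (n⁻¹ : ℝ) • u n) atTop (𝓝 v) := by
  have hinit : Tendsto (fun n : ℕ => (n⁻¹ : ℝ) • u 0) atTop (𝓝 0) := by
    simpa using
      (tendsto_inv_atTop_zero.comp (tendsto_natCast_atTop_atTop (R := ℝ))).smul_const (u 0)
  refine (add_zero v ▸ h.cesaro_smul.add hinit).congr fun n => ?_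
  rw [Finset.sum_range_sub, ← smul_add, sub_add_cancel]

theorem tendsto_nhds_zero_of_tendsto_pow {α : Type*} {l : Filter α} {f : α → ℝ} {k : ℕ}
    (hf : ∀ a, 0 ≤ f a) (h : Tendsto (fun a => f a ^ k) l (𝓝 0)) : Tendsto f l (𝓝 0) := by
  refine tendsto_order.2 ⟨fun ε hε => .of_forall fun a => hε.trans_le (hf a), fun ε hε => ?_⟩
  filter_upwards [(tendsto_order.1 h).2 _ (pow_pos hε k)] with a ha
  exact lt_of_pow_lt_pow_left₀ k hε.le ha

theorem Complex.div_norm_le_inv_re {z : ℂ} {c : ℝ} (h : c * ‖z‖ ≤ z.re) : c / ‖z‖ ≤ z⁻¹.re := by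
  rcases eq_or_ne z 0 with rfl | hz
  · simp
  have hz' : 0 < ‖z‖ := norm_pos_iff.2 hz
  rw [Complex.inv_re, Complex.normSq_eq_norm_sq, div_le_div_iff₀ hz' (by positivity)]
  nlinarith

theorem re_add_div_two_le_re {u : ℕ → ℂ} (h : ∀ j, ‖u (j + 1) - u j - 1‖ ≤ 1 / 2) (j : ℕ) :
    (u 0).re + j / 2 ≤ (u j).re := by
  induction j with
  | zero => simp
  | succ j ih =>
    have := (abs_le.1 ((Complex.abs_re_le_norm _).trans (h j))).1
    simp only [Complex.sub_re, Complex.one_re] at this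
    push_cast
    linarith

theorem inv_mul_pow_sub_inv_pow_sub_one {K : Type*} [Field K] {k : ℕ} (hk : (k : K) ≠ 0)
    {a : K} (ha : a ≠ 0) (q : K) :
    ((k : K) * (a * q) ^ k)⁻¹ - ((k : K) * a ^ k)⁻¹ - 1
      = ((q ^ k)⁻¹ - 1 + k * (q - 1) - k * (q - 1 + a ^ k)) / (k * a ^ k) := by
  rw [mul_pow, ← mul_assoc, mul_inv]
  field_simp
  ring

theorem isLittleO_inv_pow_sub_one_add (k : ℕ) :
    (fun q : ℂ => (q ^ k)⁻¹ - 1 + k * (q - 1)) =o[𝓝 1] fun q => q - 1 := by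
  have h := (hasDerivAt_pow k (1 : ℂ)).inv (by simp)
  rw [hasDerivAt_iff_isLittleO] at h
  refine h.congr_left fun q => ?_
  simp only [Pi.inv_apply, one_pow, inv_one, mul_one, smul_eq_mul]
  ring

noncomputable def fatouCoord (k : ℕ) (z : ℂ) : ℂ := ((k : ℂ) * z ^ k)⁻¹

theorem norm_fatouCoord (k : ℕ) (z : ℂ) : ‖fatouCoord k z‖ = (k * ‖z‖ ^ k)⁻¹ := by
  simp [fatouCoord]

theorem norm_sub_one_add_pow_le {k : ℕ} {C : ℝ} {a q : ℂ} (ha : a ≠ 0)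
    (h : ‖a * q - a + a ^ (k + 1)‖ ≤ C * ‖a‖ ^ (k + 2)) : ‖q - 1 + a ^ k‖ ≤ C * ‖a‖ ^ (k + 1) := by
  have : q - 1 + a ^ k = (a * q - a + a ^ (k + 1)) / a := by field_simp; ring
  rw [this, norm_div, div_le_iff₀ (norm_pos_iff.2 ha)]
  simpa [pow_succ, mul_assoc] using h

theorem norm_sub_one_le_of_norm_sub_one_add_pow_le {k : ℕ} {C : ℝ} (hC : 0 ≤ C) {a q : ℂ}
    (ha1 : ‖a‖ ≤ 1) (h : ‖q - 1 + a ^ k‖ ≤ C * ‖a‖ ^ (k + 1)) : ‖q - 1‖ ≤ (1 + C) * ‖a‖ ^ k := calc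
  ‖q - 1‖ = ‖(q - 1 + a ^ k) - a ^ k‖ := by ring_nf
  _ ≤ C * ‖a‖ ^ (k + 1) + ‖a‖ ^ k := (norm_sub_le _ _).trans (by rw [norm_pow]; linarith)
  _ ≤ (1 + C) * ‖a‖ ^ k := by
    rw [pow_succ]
    nlinarith [mul_le_mul_of_nonneg_left ha1 (by positivity : 0 ≤ C * ‖a‖ ^ k)]

theorem exists_norm_fatouCoord_sub_sub_one_le {k : ℕ} (hk : 1 ≤ k) {C : ℝ} (hC : 0 ≤ C)
    {ε : ℝ} (hε : 0 < ε) :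
    ∃ δ > 0, ∀ a b : ℂ, a ≠ 0 → ‖a‖ < δ → ‖b - a + a ^ (k + 1)‖ ≤ C * ‖a‖ ^ (k + 2) →
      ‖fatouCoord k b - fatouCoord k a - 1‖ ≤ ε := by
  set η := ε / (2 * (1 + C))
  have hη : 0 < η := by positivity
  obtain ⟨r, hr, hg⟩ := Metric.eventually_nhds_iff.1 ((isLittleO_inv_pow_sub_one_add k).def hη)
  refine ⟨min 1 (min (r / (1 + C)) η), by positivity, fun a b ha haδ hab => ?_⟩
  obtain ⟨q, rfl⟩ : ∃ q, b = a * q := ⟨b / a, by field_simp⟩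
  have hpos : 0 < ‖a‖ := norm_pos_iff.2 ha
  have hk0 : (0 : ℝ) < k := by exact_mod_cast hk
  have ha1 : ‖a‖ ≤ 1 := haδ.le.trans (min_le_left _ _)
  have har : (1 + C) * ‖a‖ < r := by
    have := haδ.trans_le ((min_le_right _ _).trans (min_le_left _ _))
    rwa [lt_div_iff₀' (by positivity)] at this
  have haη : C * ‖a‖ ≤ ε / 2 := calc
    C * ‖a‖ ≤ (1 + C) * η := by
      gcongr
      · linarith
      · exact haδ.le.trans ((min_le_right _ _).trans (min_le_right _ _))
    _ = ε / 2 := by simp only [η]; field_simp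
  have hq := norm_sub_one_add_pow_le ha hab
  have hq1 := norm_sub_one_le_of_norm_sub_one_add_pow_le hC ha1 hq
  have hgq := hg (show dist q 1 < r by
    rw [dist_eq_norm]
    refine hq1.trans_lt (lt_of_le_of_lt ?_ har)
    gcongr
    exact pow_le_of_le_one hpos.le ha1 (by omega))
  have hnum : ‖(q ^ k)⁻¹ - 1 + k * (q - 1) - k * (q - 1 + a ^ k)‖ ≤ ε * (k * ‖a‖ ^ k) := calc
    _ ≤ ‖(q ^ k)⁻¹ - 1 + k * (q - 1)‖ + ‖(k : ℂ) * (q - 1 + a ^ k)‖ := norm_sub_le _ _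
    _ ≤ η * ((1 + C) * ‖a‖ ^ k) + k * (C * ‖a‖ ^ (k + 1)) := by
      rw [norm_mul, Complex.norm_natCast]
      gcongr
      exact hgq.trans (by gcongr)
    _ = η * (1 + C) * ‖a‖ ^ k + k * ‖a‖ ^ k * (C * ‖a‖) := by ring
    _ ≤ k * (ε / 2) * ‖a‖ ^ k + k * ‖a‖ ^ k * (ε / 2) := by
      rw [show η * (1 + C) = ε / 2 by simp only [η]; field_simp]
      gcongr
      exact le_mul_of_one_le_left (by positivity) (by exact_mod_cast hk)
    _ = ε * (k * ‖a‖ ^ k) := by ring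
  have hden : ‖(k : ℂ) * a ^ k‖ = k * ‖a‖ ^ k := by simp
  rw [fatouCoord, fatouCoord, inv_mul_pow_sub_inv_pow_sub_one (by exact_mod_cast hk0.ne') ha,
    norm_div, hden, div_le_iff₀ (by positivity)]
  exact hnum

theorem norm_pow_le_of_norm_fatouCoord_sub_sub_one_le {k : ℕ} (hk : 1 ≤ k) {c : ℝ} (hc : 0 < c)
    {x : ℕ → ℂ} (hx0 : x 0 ≠ 0) (hsector : c * ‖x 0‖ ^ k ≤ (x 0 ^ k).re)
    (hstep : ∀ j, ‖fatouCoord k (x (j + 1)) - fatouCoord k (x j) - 1‖ ≤ 1 / 2) (j : ℕ) :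
    ‖x j‖ ^ k ≤ (1 / c + 2) * ‖x 0‖ ^ k / (1 + j * ‖x 0‖ ^ k) := by
  set t := ‖x 0‖ ^ k
  have ht : 0 < t := by positivity
  have hk0 : (0 : ℝ) < k := by exact_mod_cast hk
  have hu0 : c / (k * t) ≤ (fatouCoord k (x 0)).re := by
    have hnorm : ‖(k : ℂ) * x 0 ^ k‖ = k * t := by simp [t]
    rw [← hnorm]
    refine Complex.div_norm_le_inv_re ?_
    rw [hnorm, ← Complex.ofReal_natCast, Complex.re_ofReal_mul, mul_left_comm]
    exact mul_le_mul_of_nonneg_left hsector hk0.le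
  have hre : c / (k * t) + j / 2 ≤ ‖fatouCoord k (x j)‖ :=
    ((add_le_add_left hu0 _).trans (re_add_div_two_le_re (u := fun j => fatouCoord k (x j))
      hstep j)).trans (Complex.re_le_norm _)
  calc ‖x j‖ ^ k = (k * ‖fatouCoord k (x j)‖)⁻¹ := by
        rw [norm_fatouCoord]
        field_simp
    _ ≤ (k * (c / (k * t) + j / 2))⁻¹ := by gcongr
    _ ≤ (1 / c + 2) * t / (1 + j * t) := by
        rw [inv_eq_one_div, div_le_div_iff₀ (by positivity) (by positivity)]
        field_simp
        have hk1 : (1 : ℝ) ≤ k := by exact_mod_cast hk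
        nlinarith [mul_le_mul_of_nonneg_left hk1 (by positivity : (0 : ℝ) ≤ c * j * t),
          (by positivity : (0 : ℝ) ≤ j * t * k), sq_nonneg c]

theorem tendsto_mul_mul_pow_of_tendsto_norm_zero {k : ℕ} (hk : 1 ≤ k) {C : ℝ} (hC : 0 ≤ C)
    {x : ℕ → ℂ} (hx : ∀ j, x j ≠ 0)
    (hrec : ∀ j, ‖x (j + 1) - x j + x j ^ (k + 1)‖ ≤ C * ‖x j‖ ^ (k + 2))
    (hlim : Tendsto (fun j => ‖x j‖) atTop (𝓝 0)) :
    Tendsto (fun n : ℕ => (k : ℂ) * n * x n ^ k) atTop (𝓝 1) := by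
  have hinc : Tendsto (fun j => fatouCoord k (x (j + 1)) - fatouCoord k (x j)) atTop (𝓝 1) := by
    refine Metric.tendsto_nhds.2 fun ε hε => ?_
    obtain ⟨δ, hδ, hstep⟩ := exists_norm_fatouCoord_sub_sub_one_le hk hC (half_pos hε)
    filter_upwards [(tendsto_order.1 hlim).2 δ hδ] with j hj
    rw [dist_eq_norm]
    exact (hstep _ _ (hx j) hj (hrec j)).trans_lt (half_lt_self hε)
  have hcesaro :=
    (tendsto_inv_smul_of_tendsto_sub (u := fun j => fatouCoord k (x j)) hinc).inv₀ one_ne_zero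
  rw [inv_one] at hcesaro
  refine hcesaro.congr fun n => ?_
  simp only [fatouCoord, Complex.real_smul, Complex.ofReal_inv, Complex.ofReal_natCast, mul_inv,
    inv_inv]
  ring

/-- Leau–Fatou orbit asymptotics: for orbits `x_{j+1} = x_j − x_j^m + O(x_j^{m+1})` with
nonincreasing modulus and `Re(x_j^{m−1}) ≥ c|x_j|^{m−1}`, if `x₀` is small enough then
`(m−1)·j·x_j^{m−1} → 1` and `|x_j|^{m−1} ≤ C'|x₀|^{m−1}/(1 + j|x₀|^{m−1})`. -/
theorem stmt14 (m : ℕ) (hm : 2 ≤ m) (c C : ℝ) (hc : 0 < c) (hC : 0 < C) :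
    ∃ δ > 0, ∃ C' > 0, ∀ x : ℕ → ℂ,
      (∀ j, x j ≠ 0) →
      (∀ j, ‖x (j + 1) - x j + (x j) ^ m‖ ≤ C * ‖x j‖ ^ (m + 1)) →
      (∀ j, ‖x (j + 1)‖ ≤ ‖x j‖) →
      (∀ j, c * ‖x j‖ ^ (m - 1) ≤ ((x j) ^ (m - 1)).re) →
      ‖x 0‖ < δ →
      Filter.Tendsto (fun j : ℕ => ((m : ℂ) - 1) * (j : ℂ) * (x j) ^ (m - 1))
        Filter.atTop (nhds 1) ∧
      ∀ j : ℕ, ‖x j‖ ^ (m - 1) ≤ C' * ‖x 0‖ ^ (m - 1) / (1 + j * ‖x 0‖ ^ (m - 1)) := by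
  obtain ⟨k, rfl⟩ : ∃ k, m = k + 1 := ⟨m - 1, by omega⟩
  have hk : 1 ≤ k := by omega
  obtain ⟨δ, hδ, hstep⟩ := exists_norm_fatouCoord_sub_sub_one_le hk hC.le one_half_pos
  refine ⟨δ, hδ, 1 / c + 2, by positivity, fun x hx hrec hmono hsector hx0 => ?_⟩
  simp only [Nat.add_sub_cancel] at hsector ⊢
  have hsmall (j : ℕ) : ‖x j‖ < δ :=
    (antitone_nat_of_succ_le (f := fun j => ‖x j‖) hmono (Nat.zero_le j)).trans_lt hx0
  have hbound := norm_pow_le_of_norm_fatouCoord_sub_sub_one_le hk hc (hx 0) (hsector 0)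
    fun j => hstep _ _ (hx j) (hsmall j) (hrec j)
  have ht : 0 < ‖x 0‖ ^ k := by have := hx 0; positivity
  have hlim : Tendsto (fun j => ‖x j‖) atTop (𝓝 0) :=
    tendsto_nhds_zero_of_tendsto_pow (fun _ => norm_nonneg _) <|
      squeeze_zero (fun _ => by positivity) hbound <| tendsto_const_nhds.div_atTop <|
        tendsto_atTop_add_const_left _ 1 (tendsto_natCast_atTop_atTop.atTop_mul_const ht)
  refine ⟨?_, hbound⟩
  push_cast
  simpa using tendsto_mul_mul_pow_of_tendsto_norm_zero hk hC.le hx hrec hlim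
end
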